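/- Let X be a second countable locally compact metric space and μ_X a probability measure on X. Suppose for every ε > 0 and every f ∈ C_c(X) there exists q(ε, f) ∈ ℕ such that for all q ≥ q(ε, f), the proportion of measures ν in a finite set Ω_q of probability measures with |ν(f) − μ_X(f)| > ε is at most 2ε. Then there exist subsets Ω_q' ⊆ Ω_q with |Ω_q'|/|Ω_q| → 1 such that every sequence ν_q ∈ Ω_q' converges weak* to μ_X. -/

import Mathlib

open MeasureTheory Filter
open scoped Classical

open scoped Topology Finset

/-!
Fix a sequence `g i` of compactly supported continuous functions that is uniformly dense in
`C_c(X)`. For a fixed level `k`, the proportion of `ν ∈ Ω q` with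
`|ν(g i) - μ(g i)| ≤ 1/(k+1)` for all `i < k` tends to `1` as `q → ∞` (union bound over the
hypothesis). Choosing the level `K q` diagonally, so slowly that `K q → ∞` while the good
proportion at level `K q` still tends to `1`, gives `Ω' q`. Along any `ν q ∈ Ω' q` we get
`ν q (g i) → μ (g i)` for every `i`, and since `|ν(f) - ν(g)| ≤ ‖f - g‖_∞` for probability
measures, uniform density of the `g i` extends this to every `f ∈ C_c(X)`.
-/

theorem DenseRange.exists_forall_dist_lt_of_isCompact {X Y ι : Type*} [TopologicalSpace X]
    [PseudoMetricSpace Y] {u : ι → C(X, Y)} (hu : DenseRange u) (f : C(X, Y)) {K : Set X}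
    (hK : IsCompact K) {δ : ℝ} (hδ : 0 < δ) : ∃ n, ∀ x ∈ K, dist (f x) (u n x) < δ := by
  have hunif : TendstoUniformlyOn (fun g : C(X, Y) => ⇑g) f (𝓝 f) K :=
    ContinuousMap.tendsto_iff_forall_isCompact_tendstoUniformlyOn.1 tendsto_id K hK
  obtain ⟨_, ⟨n, rfl⟩, hn⟩ := hu.inter_nhds_nonempty (Metric.tendstoUniformlyOn_iff.1 hunif δ hδ)
  exact ⟨n, hn⟩

theorem exists_seq_dense_hasCompactSupport {X : Type*} [TopologicalSpace X] [RegularSpace X]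
    [LocallyCompactSpace X] [SecondCountableTopology X] :
    ∃ g : ℕ → X → ℝ, (∀ n, Continuous (g n) ∧ HasCompactSupport (g n)) ∧
      ∀ f : X → ℝ, Continuous f → HasCompactSupport f → ∀ δ > 0,
        ∃ n, ∀ x, dist (f x) (g n x) ≤ δ := by
  let K := CompactExhaustion.choice X
  choose χ hχK _ hχc hχI using fun m => exists_continuous_one_zero_of_isCompact
    (K.isCompact m) isClosed_empty (Set.disjoint_empty (K m))
  let u := TopologicalSpace.denseSeq C(X, ℝ)
  refine ⟨fun p x => χ p.unpair.2 x * u p.unpair.1 x,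
    fun p => ⟨by fun_prop, (hχc p.unpair.2).mul_right⟩, fun f hf hfc δ hδ => ?_⟩
  obtain ⟨m, hm⟩ := K.exists_superset_of_isCompact hfc
  obtain ⟨n, hn⟩ := (TopologicalSpace.denseRange_denseSeq C(X, ℝ))
    |>.exists_forall_dist_lt_of_isCompact ⟨f, hf⟩ (hχc m) hδ
  refine ⟨Nat.pair n m, fun x => ?_⟩
  -- `f = χ m * f`, so only closeness of `f` and `u n` on the compact `tsupport (χ m)` matters
  have hfχ : f x = χ m x * f x := by
    by_cases hx : x ∈ K m
    · simp [hχK m hx]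
    · simp [image_eq_zero_of_notMem_tsupport (fun h => hx (hm h))]
  simp only [Nat.unpair_pair]
  rw [Real.dist_eq, hfχ, ← mul_sub, abs_mul, ← Real.dist_eq]
  by_cases hx : x ∈ tsupport (χ m)
  · calc |χ m x| * dist (f x) (u n x) ≤ 1 * δ := by
          gcongr
          · exact abs_le.2 ⟨by linarith [(hχI m x).1], (hχI m x).2⟩
          · exact (hn x hx).le
      _ = δ := one_mul δ
  · simp [image_eq_zero_of_notMem_tsupport hx, hδ.le]

section Proportions

variable {α β ι : Type*} {l : Filter β} {s : β → Finset α}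

theorem tendsto_card_filter_lt_div_zero {d : α → ℝ}
    (h : ∀ ε > 0, ∀ᶠ b in l, (#{x ∈ s b | ε < d x} : ℝ) ≤ 2 * ε * #(s b))
    {ε : ℝ} (hε : 0 < ε) : Tendsto (fun b => (#{x ∈ s b | ε < d x} : ℝ) / #(s b)) l (𝓝 0) := by
  refine tendsto_order.2 ⟨fun a ha => .of_forall fun b => ha.trans_le (by positivity),
    fun a ha => ?_⟩
  -- shrinking the threshold only enlarges the exceptional set
  set η := min ε (a / 4)
  have hη : 0 < η := by positivity
  filter_upwards [h η hη] with b hb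
  calc (#{x ∈ s b | ε < d x} : ℝ) / #(s b) ≤ #{x ∈ s b | η < d x} / #(s b) := by
        gcongr
        exact min_le_left ε _
    _ ≤ 2 * η := div_le_of_le_mul₀ (by positivity) (by positivity) hb
    _ < a := by linarith [min_le_right ε (a / 4)]

theorem card_filter_not_forall_le_sum (u : Finset α) (t : Finset ι) (p : ι → α → Prop) :
    #{x ∈ u | ¬ ∀ i ∈ t, p i x} ≤ ∑ i ∈ t, #{x ∈ u | ¬ p i x} := by
  refine (Finset.card_le_card fun x hx => ?_).trans Finset.card_biUnion_le
  simp only [Finset.mem_filter, not_forall] at hx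
  obtain ⟨hxu, i, hit, hpx⟩ := hx
  exact Finset.mem_biUnion.2 ⟨i, hit, Finset.mem_filter.2 ⟨hxu, hpx⟩⟩

theorem tendsto_card_filter_forall_div_one (hs : ∀ b, (s b).Nonempty) (t : Finset ι)
    {p : ι → α → Prop}
    (h : ∀ i ∈ t, Tendsto (fun b => (#{x ∈ s b | ¬ p i x} : ℝ) / #(s b)) l (𝓝 0)) :
    Tendsto (fun b => (#{x ∈ s b | ∀ i ∈ t, p i x} : ℝ) / #(s b)) l (𝓝 1) := by
  have hsum := tendsto_finsetSum t h
  rw [Finset.sum_const_zero] at hsum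
  refine tendsto_of_tendsto_of_tendsto_of_le_of_le (by simpa using tendsto_const_nhds.sub hsum)
    tendsto_const_nhds (fun b => ?_) fun b =>
      div_le_one_of_le₀ (Nat.cast_le.2 (Finset.card_filter_le _ _)) (by positivity)
  have hpos : (0 : ℝ) < #(s b) := mod_cast (hs b).card_pos
  have hsplit := Finset.card_filter_add_card_filter_not (s := s b) (fun x => ∀ i ∈ t, p i x)
  have hbad := card_filter_not_forall_le_sum (s b) t p
  rw [← Finset.sum_div, sub_le_iff_le_add, ← add_div, le_div_iff₀ hpos, one_mul]
  have hcover : #(s b) ≤ #{x ∈ s b | ∀ i ∈ t, p i x} + ∑ i ∈ t, #{x ∈ s b | ¬ p i x} :=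
    hsplit.ge.trans (by gcongr)
  simpa only [Nat.cast_add, Nat.cast_sum] using (Nat.cast_le (α := ℝ)).2 hcover

end Proportions

theorem exists_tendsto_atTop_eventually_diag (P : ℕ → ℕ → Prop)
    (h : ∀ k, ∀ᶠ q in atTop, P k q) :
    ∃ K : ℕ → ℕ, Tendsto K atTop atTop ∧ ∀ᶠ q in atTop, P (K q) q := by
  choose Q hQ using fun k => eventually_atTop.1 (h k)
  refine ⟨fun q => Nat.findGreatest (fun k => Q k ≤ q) q,
    tendsto_atTop_atTop.2 fun k => ⟨max k (Q k), fun q hq =>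
      Nat.le_findGreatest (le_of_max_le_left hq) (le_of_max_le_right hq)⟩,
    eventually_atTop.2 ⟨Q 0, fun q hq =>
      hQ _ q (Nat.findGreatest_spec (P := fun k => Q k ≤ q) (Nat.zero_le q) hq)⟩⟩

theorem exists_density_one_forall_tendsto {α E : Type*} [PseudoMetricSpace E]
    {Ω : ℕ → Finset α} (hne : ∀ q, (Ω q).Nonempty) (F : ℕ → α → E) (c : ℕ → E)
    (h : ∀ i, ∀ ε > 0,
      Tendsto (fun q => (#{ν ∈ Ω q | ε < dist (F i ν) (c i)} : ℝ) / #(Ω q)) atTop (𝓝 0)) :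
    ∃ Ω' : ℕ → Finset α, (∀ q, Ω' q ⊆ Ω q) ∧
      Tendsto (fun q => (#(Ω' q) : ℝ) / #(Ω q)) atTop (𝓝 1) ∧
      ∀ ν : ℕ → α, (∀ q, ν q ∈ Ω' q) → ∀ i, Tendsto (fun q => F i (ν q)) atTop (𝓝 (c i)) := by
  let G (k q : ℕ) := {ν ∈ Ω q | ∀ i ∈ Finset.range k, dist (F i ν) (c i) ≤ 1 / ((k : ℝ) + 1)}
  have hG (k : ℕ) : Tendsto (fun q => (#(G k q) : ℝ) / #(Ω q)) atTop (𝓝 1) :=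
    tendsto_card_filter_forall_div_one hne _ fun i _ => by
      simpa only [not_le] using h i _ Nat.one_div_pos_of_nat
  obtain ⟨K, hK, hKG⟩ := exists_tendsto_atTop_eventually_diag
    (fun k q => 1 - 1 / ((k : ℝ) + 1) < #(G k q) / #(Ω q))
    fun k => (hG k).eventually (lt_mem_nhds (sub_lt_self 1 Nat.one_div_pos_of_nat))
  have hK0 : Tendsto (fun q => 1 / ((K q : ℝ) + 1)) atTop (𝓝 0) :=
    tendsto_one_div_add_atTop_nhds_zero_nat.comp hK
  refine ⟨fun q => G (K q) q, fun q => Finset.filter_subset _ _, ?_, fun ν hν i => ?_⟩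
  · refine tendsto_of_tendsto_of_tendsto_of_le_of_le' (by simpa using tendsto_const_nhds.sub hK0)
      tendsto_const_nhds (hKG.mono fun q hq => hq.le) (.of_forall fun q => ?_)
    exact div_le_one_of_le₀ (Nat.cast_le.2 (Finset.card_filter_le _ _)) (by positivity)
  · refine tendsto_iff_dist_tendsto_zero.2 (squeeze_zero' (.of_forall fun q => dist_nonneg) ?_ hK0)
    filter_upwards [hK.eventually_gt_atTop i] with q hq
    exact (Finset.mem_filter.1 (hν q)).2 i (Finset.mem_range.2 hq)

theorem dist_integral_le_of_forall_dist_le {α E : Type*} [MeasurableSpace α]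
    [NormedAddCommGroup E] [NormedSpace ℝ E] {μ : Measure α} [IsProbabilityMeasure μ]
    {f g : α → E} (hf : Integrable f μ) (hg : Integrable g μ) {δ : ℝ}
    (h : ∀ x, dist (f x) (g x) ≤ δ) : dist (∫ x, f x ∂μ) (∫ x, g x ∂μ) ≤ δ := by
  rw [dist_eq_norm, ← integral_sub hf hg]
  simpa using norm_integral_le_of_norm_le_const (μ := μ)
    (Eventually.of_forall fun x => (dist_eq_norm (f x) (g x)).symm.trans_le (h x))

theorem tendsto_integral_of_uniform_approx {X ι : Type*} [TopologicalSpace X] [MeasurableSpace X]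
    [OpensMeasurableSpace X] {l : Filter ι} {ν : ι → Measure X} [∀ q, IsProbabilityMeasure (ν q)]
    {μ : Measure X} [IsProbabilityMeasure μ] {g : ℕ → X → ℝ}
    (hg : ∀ n, Continuous (g n) ∧ HasCompactSupport (g n))
    (hlim : ∀ n, Tendsto (fun q => ∫ x, g n x ∂ν q) l (𝓝 (∫ x, g n x ∂μ)))
    {f : X → ℝ} (hf : Continuous f) (hfc : HasCompactSupport f)
    (happrox : ∀ δ > 0, ∃ n, ∀ x, dist (f x) (g n x) ≤ δ) :
    Tendsto (fun q => ∫ x, f x ∂ν q) l (𝓝 (∫ x, f x ∂μ)) := by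
  refine Metric.tendsto_nhds.2 fun ε hε => ?_
  obtain ⟨n, hn⟩ := happrox (ε / 3) (by positivity)
  have hclose (ρ : Measure X) [IsProbabilityMeasure ρ] :
      dist (∫ x, f x ∂ρ) (∫ x, g n x ∂ρ) ≤ ε / 3 :=
    dist_integral_le_of_forall_dist_le (hf.integrable_of_hasCompactSupport hfc)
      ((hg n).1.integrable_of_hasCompactSupport (hg n).2) hn
  filter_upwards [Metric.tendsto_nhds.1 (hlim n) (ε / 3) (by positivity)] with q hq
  calc dist (∫ x, f x ∂ν q) (∫ x, f x ∂μ)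
      ≤ dist (∫ x, f x ∂ν q) (∫ x, g n x ∂ν q) + dist (∫ x, g n x ∂ν q) (∫ x, g n x ∂μ)
        + dist (∫ x, g n x ∂μ) (∫ x, f x ∂μ) := dist_triangle4 _ _ _ _
    _ < ε / 3 + ε / 3 + ε / 3 := by
        rw [dist_comm (∫ x, g n x ∂μ)]
        exact add_lt_add_of_lt_of_le (add_lt_add_of_le_of_lt (hclose (ν q)) hq) (hclose μ)
    _ = ε := by ring

/-- Extraction of a density-one family of almost-equidistributed measures: if for every
`ε > 0` and every compactly supported continuous `f` the proportion of measures
`ν ∈ Ω_q` with `|ν(f) - μ_X(f)| > ε` is eventually at most `2ε`, then there are subsets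
`Ω_q' ⊆ Ω_q` with `|Ω_q'|/|Ω_q| → 1` such that every sequence `ν_q ∈ Ω_q'` converges
weak* to `μ_X`. -/
theorem density_one_weak_star_convergence {X : Type*} [MetricSpace X]
    [SecondCountableTopology X] [LocallyCompactSpace X]
    [MeasurableSpace X] [BorelSpace X]
    (μ : Measure X) [IsProbabilityMeasure μ]
    (Ω : ℕ → Finset (Measure X)) (hne : ∀ q, (Ω q).Nonempty)
    (hprob : ∀ q, ∀ ν ∈ Ω q, IsProbabilityMeasure ν)
    (h : ∀ ε > (0 : ℝ), ∀ f : X → ℝ, Continuous f → HasCompactSupport f →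
      ∃ q₀ : ℕ, ∀ q ≥ q₀,
        (((Ω q).filter (fun ν => |∫ x, f x ∂ν - ∫ x, f x ∂μ| > ε)).card : ℝ)
          ≤ 2 * ε * ((Ω q).card : ℝ)) :
    ∃ Ω' : ℕ → Finset (Measure X), (∀ q, Ω' q ⊆ Ω q) ∧
      Tendsto (fun q => ((Ω' q).card : ℝ) / ((Ω q).card : ℝ)) atTop (nhds 1) ∧
      ∀ ν : ℕ → Measure X, (∀ q, ν q ∈ Ω' q) →
        ∀ f : X → ℝ, Continuous f → HasCompactSupport f →
          Tendsto (fun q => ∫ x, f x ∂(ν q)) atTop (nhds (∫ x, f x ∂μ)) := by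
  obtain ⟨g, hg, hdense⟩ := exists_seq_dense_hasCompactSupport (X := X)
  obtain ⟨Ω', hsub, hratio, hconv⟩ := exists_density_one_forall_tendsto hne
    (fun i ν => ∫ x, g i x ∂ν) (fun i => ∫ x, g i x ∂μ) fun i ε hε =>
      tendsto_card_filter_lt_div_zero
        (fun η hη => eventually_atTop.2 (h η hη (g i) (hg i).1 (hg i).2)) hε
  refine ⟨Ω', hsub, hratio, fun ν hν f hf hfc => ?_⟩
  have hνprob (q : ℕ) : IsProbabilityMeasure (ν q) := hprob q (ν q) (hsub q (hν q))
  exact tendsto_integral_of_uniform_approx hg (hconv ν hν) hf hfc (hdense f hf hfc)
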